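/- arXiv:1803.10672 — 2 statements merged into one kernel-verified Lean document; each statement's English description precedes it below -/
import Mathlib

section
/- Let n be an outer normal to P at q and let W ⊆ V be any subset with n ∈ W. Then sup { t ∈ [0,1] : for all w ∈ W, F_b(t,w) ≥ 0 } = ‖q‖ / ‖q − b‖. -/
/-! Write `q = μ • (-b)` with `μ > 0`. As `q ∈ closure P`, `-μ ⟪b, w⟫ = ⟪q, w⟫ ≤ M w` for every
`w`, which says exactly that `F_b(μ / (μ + 1), w) ≥ 0`. At the outer normal `n` this bound is
attained, and `⟪b, n⟫ < M n` because `b` is interior, so `⟪b, n⟫ < 0` and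
`F_b(t, n) = ⟪b, n⟫ ((μ + 1) t - μ)` is negative for `t > μ / (μ + 1)`. Finally
`‖q‖ / ‖q - b‖ = μ / (μ + 1)`. -/

open RealInnerProductSpace Filter Topology

section InnerProductSpace

variable {V : Type*} [NormedAddCommGroup V] [InnerProductSpace ℝ V]

theorem inner_le_of_mem_closure {P : Set V} {w : V} {c : ℝ} (hP : ∀ x ∈ P, ⟪x, w⟫ ≤ c)
    {x : V} (hx : x ∈ closure P) : ⟪x, w⟫ ≤ c :=
  closure_minimal (t := {x | ⟪x, w⟫ ≤ c}) hP
    (isClosed_le (continuous_id.inner continuous_const) continuous_const) hx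

theorem inner_lt_of_mem_interior {P : Set V} {w : V} {c : ℝ} (hP : ∀ x ∈ P, ⟪x, w⟫ ≤ c)
    (hw : w ≠ 0) {b : V} (hb : b ∈ interior P) : ⟪b, w⟫ < c := by
  have hpath : Tendsto (fun t : ℝ => b + t • w) (𝓝[>] 0) (𝓝 b) :=
    tendsto_nhdsWithin_of_tendsto_nhds (Continuous.tendsto' (by fun_prop) 0 b (by simp))
  obtain ⟨t, hbtw, ht⟩ :=
    ((hpath.eventually (mem_interior_iff_mem_nhds.mp hb)).and self_mem_nhdsWithin).exists
  have hstep : ⟪b, w⟫ + t * ‖w‖ ^ 2 ≤ c := by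
    simpa only [inner_add_left, real_inner_smul_left, real_inner_self_eq_norm_sq] using hP _ hbtw
  have : 0 < t * ‖w‖ ^ 2 := mul_pos ht (by positivity)
  linarith

theorem norm_smul_neg_div_norm_sub_self {b : V} (hb : b ≠ 0) {μ : ℝ} (hμ : 0 ≤ μ) :
    ‖μ • -b‖ / ‖μ • -b - b‖ = μ / (μ + 1) := by
  have : μ • -b - b = -((μ + 1) • b) := by module
  rw [this, norm_neg, norm_smul, norm_smul, norm_neg, Real.norm_of_nonneg hμ,
    Real.norm_of_nonneg (by linarith), mul_div_mul_right _ _ (norm_ne_zero_iff.mpr hb)]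

end InnerProductSpace

theorem isGreatest_convexCombination_nonneg {ι : Type*} (β m : ι → ℝ) (W : Set ι) {μ : ℝ}
    (hμ : 0 < μ) (hle : ∀ w ∈ W, -(μ * β w) ≤ m w) {n : ι} (hnW : n ∈ W)
    (hn : m n = -(μ * β n)) (hβn : β n < m n) :
    IsGreatest {t : ℝ | t ∈ Set.Icc (0 : ℝ) 1 ∧ ∀ w ∈ W, 0 ≤ t * β w + (1 - t) * m w}
      (μ / (μ + 1)) := by
  have hμ1 : 0 < μ + 1 := by linarith
  refine ⟨⟨⟨by positivity, (div_le_one hμ1).mpr (by linarith)⟩, fun w hw => ?_⟩, ?_⟩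
  · have : μ / (μ + 1) * β w + (1 - μ / (μ + 1)) * m w = (μ * β w + m w) / (μ + 1) := by
      field_simp; ring
    rw [this]
    exact div_nonneg (by linarith [hle w hw]) hμ1.le
  · rintro t ⟨-, hall⟩
    have hβneg : β n < 0 := by nlinarith
    have : 0 ≤ β n * (t * (μ + 1) - μ) := by nlinarith [hall n hnW]
    rw [le_div_iff₀ hμ1]
    nlinarith

theorem sup_t_eq_ratio_q_general
    {V : Type*} [NormedAddCommGroup V] [InnerProductSpace ℝ V]
    (P : Set V)
    (b : V) (hb : b ∈ interior P) (hb0 : b ≠ 0)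
    (M : V → ℝ) (hM : ∀ w : V, IsGreatest ((fun x => ⟪x, w⟫) '' P) (M w))
    (q : V) (hq : q ∈ frontier P) (hqray : ∃ μ : ℝ, 0 < μ ∧ q = μ • (-b))
    (n : V) (hn : n ≠ 0) (hqn : ⟪q, n⟫ = M n)
    (W : Set V) (hnW : n ∈ W) :
    sSup {t : ℝ | t ∈ Set.Icc (0 : ℝ) 1 ∧ ∀ w ∈ W, 0 ≤ t * ⟪b, w⟫ + (1 - t) * M w}
      = ‖q‖ / ‖q - b‖ := by
  obtain ⟨μ, hμ, rfl⟩ := hqray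
  have hPM : ∀ w, ∀ x ∈ P, ⟪x, w⟫ ≤ M w := fun w x hx => (hM w).2 ⟨x, hx, rfl⟩
  have hq_inner : ∀ w, ⟪μ • -b, w⟫ = -(μ * ⟪b, w⟫) := fun w => by
    rw [real_inner_smul_left, inner_neg_left, mul_neg]
  have hqM : ∀ w ∈ W, -(μ * ⟪b, w⟫) ≤ M w := fun w _ =>
    hq_inner w ▸ inner_le_of_mem_closure (hPM w) (frontier_subset_closure hq)
  rw [norm_smul_neg_div_norm_sub_self hb0 hμ.le]
  exact (isGreatest_convexCombination_nonneg (fun w => ⟪b, w⟫) M W hμ hqM hnW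
    (hq_inner n ▸ hqn.symm) (inner_lt_of_mem_interior (hPM n) hn hb)).csSup_eq

/-- Part (1) of Corollary 3.2 of the paper.  Let `P` be a convex polytope in a
finite-dimensional real inner product space whose interior contains the origin,
`b ∈ interior P` with `b ≠ 0`, `M w = max_{x ∈ P} ⟪x, w⟫`, and
`F_b(t, w) = t * ⟪b, w⟫ + (1 - t) * M w`.  Let `q` be the unique frontier point of `P`
on the ray `{λ • (-b) : λ > 0}` and let `n ≠ 0` be an outer normal to `P` at `q`.
Then for any `W ⊆ V` containing `n`:
`sup {t ∈ [0,1] : ∀ w ∈ W, F_b(t, w) ≥ 0} = ‖q‖ / ‖q - b‖`. -/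
theorem sup_t_eq_ratio_q
    {V : Type*} [NormedAddCommGroup V] [InnerProductSpace ℝ V] [FiniteDimensional ℝ V]
    (S : Finset V) (P : Set V) (hP : P = convexHull ℝ (S : Set V))
    (h0 : (0 : V) ∈ interior P)
    (b : V) (hb : b ∈ interior P) (hb0 : b ≠ 0)
    (M : V → ℝ) (hM : ∀ w : V, IsGreatest ((fun x => ⟪x, w⟫) '' P) (M w))
    (q : V) (hq : q ∈ frontier P) (hqray : ∃ μ : ℝ, 0 < μ ∧ q = μ • (-b))
    (n : V) (hn : n ≠ 0) (hqn : ⟪q, n⟫ = M n)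
    (W : Set V) (hnW : n ∈ W) :
    sSup {t : ℝ | t ∈ Set.Icc (0 : ℝ) 1 ∧ ∀ w ∈ W, 0 ≤ t * ⟪b, w⟫ + (1 - t) * M w}
      = ‖q‖ / ‖q - b‖ :=
  sup_t_eq_ratio_q_general P b hb hb0 M hM q hq hqray n hn hqn W hnW
end

section
/- Fix u ∈ V, u ≠ 0, and let H := { w ∈ V : ⟨u,w⟩ ≥ 0 }. Let π : V → V denote the orthogonal projection onto the hyperplane u^⊥, and assume π(b) ≠ 0. Suppose there exists an outer normal n to P at q with ⟨u,n⟩ < 0 (i.e. n ∉ H). Let q̃ denote the unique point of the frontier of π(P), taken inside the hyperplane u^⊥, lying on the ray {λ·(−π(b)) : λ > 0}. Then sup { t ∈ [0,1] : for all w ∈ H, F_b(t,w) ≥ 0 } = ‖q̃‖ / ‖q̃ − π(b)‖. -/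
/-!
Write `q̃ = μ • -π b`. Since `π '' P` is convex with `0` in its interior and contains
`π q = ν • -π b`, the frontier point `q̃` satisfies `ν ≤ μ`. A lift of `q̃` to `P` has the form
`p = c • u + μ • -b`, and testing `p` against the outer normal `n` at `q` gives `c ≥ 0`; hence
`M w ≥ ⟪p, w⟫ ≥ -μ ⟪b, w⟫` on `H`, so `t = μ / (μ + 1)` is admissible. Conversely, a supporting
normal `m` of `π '' P` at `q̃` lies in `u^⊥ ⊆ H` and satisfies `M m = ⟪q̃, m⟫ = -μ ⟪b, m⟫ > 0`,
which forces `t ≤ μ / (μ + 1)`. Finally `‖q̃‖ / ‖q̃ - π b‖ = μ / (μ + 1)`.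
-/

open RealInnerProductSpace Set

section InnerProductSpace

variable {E : Type*} [NormedAddCommGroup E] [InnerProductSpace ℝ E]

theorem Convex.le_of_smul_mem_of_smul_notMem_interior {C : Set E} (hC : Convex ℝ C)
    (h0 : (0 : E) ∈ interior C) {y : E} {μ ν : ℝ} (hμ : 0 ≤ μ) (hν : ν • y ∈ C)
    (hμy : μ • y ∉ interior C) : ν ≤ μ := by
  by_contra! hμν
  have hν0 : 0 < ν := hμ.trans_lt hμν
  apply hμy
  have h := hC.combo_interior_self_mem_interior h0 hν (a := 1 - μ / ν) (b := μ / ν)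
    (by rw [sub_pos, div_lt_one hν0]; exact hμν) (by positivity) (by ring)
  rwa [smul_zero, zero_add, smul_smul, div_mul_cancel₀ _ hν0.ne'] at h

theorem Convex.exists_inner_le_of_notMem_interior [CompleteSpace E] {C : Set E}
    (hC : Convex ℝ C) (h0 : (0 : E) ∈ interior C) {x : E} (hx : x ∉ interior C) :
    ∃ m : E, 0 < ⟪x, m⟫ ∧ ∀ y ∈ C, ⟪y, m⟫ ≤ ⟪x, m⟫ := by
  obtain ⟨f, hf⟩ := geometric_hahn_banach_open_point hC.interior isOpen_interior hx
  have hf_le : ∀ y ∈ C, f y ≤ f x := by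
    have hCcl : C ⊆ closure (interior C) := by
      rw [hC.closure_interior_eq_closure_of_nonempty_interior ⟨0, h0⟩]
      exact subset_closure
    exact fun y hy => closure_minimal (fun z hz => (hf z hz).le)
      (isClosed_Iic.preimage f.continuous) (hCcl hy)
  refine ⟨(InnerProductSpace.toDual ℝ E).symm f, ?_, fun y hy => ?_⟩
  · simpa [real_inner_comm _ x] using hf 0 h0
  · simpa [real_inner_comm _ x, real_inner_comm _ y] using hf_le y hy

theorem Submodule.isOpenMap_orthogonalProjectionOnto (K : Submodule ℝ E)
    [K.HasOrthogonalProjection] : IsOpenMap K.orthogonalProjectionOnto := by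
  refine IsOpenMap.of_sections fun x => ⟨fun y => y + (x - K.starProjection x),
    (continuous_subtype_val.add continuous_const).continuousAt, by simp, fun y => ?_⟩
  have hx : K.orthogonalProjectionOnto (x - K.starProjection x) = 0 :=
    K.orthogonalProjectionOnto_eq_zero_iff.2 (K.sub_starProjection_mem_orthogonal x)
  simp [hx]

theorem Submodule.image_inner_image_orthogonalProjectionOnto (K : Submodule ℝ E)
    [K.HasOrthogonalProjection] (P : Set E) (m : K) :
    (fun y : K => ⟪y, m⟫) '' (K.orthogonalProjectionOnto '' P) = (fun x => ⟪x, (m : E)⟫) '' P := by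
  rw [image_image]
  simp_rw [inner_orthogonalProjectionOnto_eq_of_mem_right]

theorem exists_eq_smul_add_of_orthogonalProjectionOnto_eq {u x y : E}
    (h : (ℝ ∙ u)ᗮ.orthogonalProjectionOnto x = (ℝ ∙ u)ᗮ.orthogonalProjectionOnto y) :
    ∃ c : ℝ, x = c • u + y := by
  rw [← sub_eq_zero, ← map_sub, Submodule.orthogonalProjectionOnto_eq_zero_iff,
    Submodule.orthogonal_orthogonal, Submodule.mem_span_singleton] at h
  obtain ⟨c, hc⟩ := h
  exact ⟨c, by rw [hc, sub_add_cancel]⟩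

end InnerProductSpace

theorem norm_smul_neg_div_norm_smul_neg_sub {E : Type*} [NormedAddCommGroup E] [NormedSpace ℝ E]
    {y : E} (hy : y ≠ 0) {μ : ℝ} (hμ : 0 ≤ μ) :
    ‖μ • -y‖ / ‖μ • -y - y‖ = μ / (μ + 1) := by
  have h : μ • -y - y = -((μ + 1) • y) := by module
  rw [h, norm_neg, norm_smul, norm_smul, norm_neg, Real.norm_of_nonneg hμ,
    Real.norm_of_nonneg (by linarith), mul_div_mul_right _ _ (norm_ne_zero_iff.2 hy)]

section Weights

variable {V : Type*} [NormedAddCommGroup V] [InnerProductSpace ℝ V]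

/-- The `t ∈ [0,1]` with `F_b(t, ·) ≥ 0` on `H = {w | 0 ≤ ⟪u, w⟫}`. -/
def nonnegWeights (u b : V) (M : V → ℝ) : Set ℝ :=
  {t | t ∈ Icc (0 : ℝ) 1 ∧ ∀ w : V, 0 ≤ ⟪u, w⟫ → 0 ≤ t * ⟪b, w⟫ + (1 - t) * M w}

theorem div_add_one_mem_nonnegWeights {u b : V} {M : V → ℝ} {P : Set V}
    (hM : ∀ w, ∀ x ∈ P, ⟪x, w⟫ ≤ M w) {c μ : ℝ} (hc : 0 ≤ c) (hμ : 0 ≤ μ)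
    (hp : c • u + μ • -b ∈ P) : μ / (μ + 1) ∈ nonnegWeights u b M := by
  refine ⟨⟨by positivity, by rw [div_le_one (by linarith)]; linarith⟩, fun w hw => ?_⟩
  have hMw : c * ⟪u, w⟫ - μ * ⟪b, w⟫ ≤ M w := by
    simpa [inner_add_left, real_inner_smul_left, sub_eq_add_neg] using hM w _ hp
  have h : μ / (μ + 1) * ⟪b, w⟫ + (1 - μ / (μ + 1)) * M w = (μ * ⟪b, w⟫ + M w) / (μ + 1) := by
    field_simp
    ring
  rw [h]
  exact div_nonneg (by nlinarith) (by linarith)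

theorem le_div_add_one_of_mem_nonnegWeights {u b m : V} {M : V → ℝ} {μ t : ℝ} (hμ : 0 < μ)
    (hum : 0 ≤ ⟪u, m⟫) (hMm : 0 < M m) (hbm : M m = -μ * ⟪b, m⟫)
    (ht : t ∈ nonnegWeights u b M) : t ≤ μ / (μ + 1) := by
  have h : 0 ≤ M m * (μ - t * (μ + 1)) := by
    have := mul_nonneg hμ.le (ht.2 m hum)
    rw [hbm] at this ⊢
    linarith
  rw [le_div_iff₀ (by linarith)]
  linarith [(mul_nonneg_iff_of_pos_left hMm).1 h]

end Weights

theorem nonneg_of_smul_add_smul_neg_mem {V : Type*} [NormedAddCommGroup V] [InnerProductSpace ℝ V]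
    {P : Set V} {u b n q : V} {c μ ν : ℝ} (hn : ∀ x ∈ P, ⟪x, n⟫ ≤ ⟪q, n⟫) (h0 : (0 : V) ∈ P)
    (hq : q = ν • -b) (hν : 0 < ν) (hνμ : ν ≤ μ) (hun : ⟪u, n⟫ < 0)
    (hp : c • u + μ • -b ∈ P) : 0 ≤ c := by
  have hbn : ⟪b, n⟫ ≤ 0 := by
    have := hn 0 h0
    simp only [hq, inner_zero_left, real_inner_smul_left, inner_neg_left] at this
    nlinarith
  have := hn _ hp
  simp only [hq, inner_add_left, real_inner_smul_left, inner_neg_left] at this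
  nlinarith

theorem sup_t_eq_ratio_projected_general
    {V : Type*} [NormedAddCommGroup V] [InnerProductSpace ℝ V] [FiniteDimensional ℝ V]
    (S : Finset V) (P : Set V) (hP : P = convexHull ℝ (S : Set V))
    (h0 : (0 : V) ∈ interior P)
    (b : V)
    (M : V → ℝ) (hM : ∀ w : V, IsGreatest ((fun x => ⟪x, w⟫) '' P) (M w))
    (q : V) (hq : q ∈ frontier P) (hqray : ∃ μ : ℝ, 0 < μ ∧ q = μ • (-b))
    (u : V)
    (K : Submodule ℝ V) (hK : K = (Submodule.span ℝ {u})ᗮ)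
    (hπb : (K.orthogonalProjectionOnto b : V) ≠ 0)
    (hn : ∃ n : V, n ≠ 0 ∧ ⟪q, n⟫ = M n ∧ ⟪u, n⟫ < 0)
    (qt : K)
    (hqt : qt ∈ frontier ((fun x : V => K.orthogonalProjectionOnto x) '' P))
    (hqtray : ∃ μ : ℝ, 0 < μ ∧ qt = μ • (-(K.orthogonalProjectionOnto b))) :
    sSup {t : ℝ | t ∈ Set.Icc (0 : ℝ) 1 ∧
        ∀ w : V, 0 ≤ ⟪u, w⟫ → 0 ≤ t * ⟪b, w⟫ + (1 - t) * M w}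
      = ‖qt‖ / ‖(qt : V) - (K.orthogonalProjectionOnto b : V)‖ := by
  subst hK
  obtain ⟨μ, hμ, rfl⟩ := hqtray
  obtain ⟨ν, hν, rfl⟩ := hqray
  obtain ⟨n, -, hnq, hun⟩ := hn
  set π := (ℝ ∙ u)ᗮ.orthogonalProjectionOnto
  have hM_le : ∀ w, ∀ x ∈ P, ⟪x, w⟫ ≤ M w := fun w x hx => (hM w).2 ⟨x, hx, rfl⟩
  have hPconv : Convex ℝ P := hP ▸ convex_convexHull ℝ _
  have hPcomp : IsCompact P := hP ▸ S.finite_toSet.isCompact_convexHull ℝ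
  have hCconv : Convex ℝ (π '' P) := hPconv.linear_image π.toLinearMap
  have h0C : (0 : _) ∈ interior (π '' P) :=
    (Submodule.isOpenMap_orthogonalProjectionOnto _).image_interior_subset P ⟨0, h0, map_zero π⟩
  have hνμ : ν ≤ μ := hCconv.le_of_smul_mem_of_smul_notMem_interior h0C hμ.le
    ⟨_, hPcomp.isClosed.frontier_subset hq, by simp [π]⟩ hqt.2
  obtain ⟨p, hpP, hpqt⟩ := (hPcomp.image π.continuous).isClosed.frontier_subset hqt
  obtain ⟨c, rfl⟩ := exists_eq_smul_add_of_orthogonalProjectionOnto_eq (y := μ • -b)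
    (by simpa [π] using hpqt)
  have hc : 0 ≤ c := nonneg_of_smul_add_smul_neg_mem (fun x hx => hnq ▸ hM_le n x hx)
    (interior_subset h0) rfl hν hνμ hun hpP
  obtain ⟨m, hm_pos, hm_le⟩ := hCconv.exists_inner_le_of_notMem_interior h0C hqt.2
  have hMm : M m = ⟪μ • -π b, m⟫ := by
    refine (hM m).unique ?_
    rw [← Submodule.image_inner_image_orthogonalProjectionOnto]
    exact ⟨⟨_, ⟨_, hpP, hpqt⟩, rfl⟩, forall_mem_image.2 hm_le⟩
  have hbm : M m = -μ * ⟪b, (m : V)⟫ := by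
    rw [hMm, real_inner_smul_left, inner_neg_left,
      Submodule.inner_orthogonalProjectionOnto_eq_of_mem_right]
    ring
  refine (IsGreatest.csSup_eq ⟨div_add_one_mem_nonnegWeights hM_le hc hμ.le hpP,
    fun t ht => le_div_add_one_of_mem_nonnegWeights hμ
      (Submodule.mem_orthogonal_singleton_iff_inner_right.1 m.2).ge (hMm ▸ hm_pos) hbm ht⟩).trans ?_
  simpa using (norm_smul_neg_div_norm_smul_neg_sub hπb hμ.le).symm

/-- Part (2) of Corollary 3.2 of the paper.  Let `P` be a convex polytope in a
finite-dimensional real inner product space whose interior contains the origin,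
`b ∈ interior P` with `b ≠ 0`, `M w = max_{x ∈ P} ⟪x, w⟫`, and
`F_b(t, w) = t * ⟪b, w⟫ + (1 - t) * M w`.  Let `q` be the unique frontier point of `P`
on the ray `{λ • (-b) : λ > 0}`.  Fix `u ≠ 0`, let `H = {w : ⟪u, w⟫ ≥ 0}` and let `π`
be the orthogonal projection onto the hyperplane `u^⊥`; assume `π b ≠ 0`.  Suppose there
is an outer normal `n` to `P` at `q` with `⟪u, n⟫ < 0`.  Let `q̃` be the unique point of
the frontier (inside `u^⊥`) of `π '' P` lying on the ray `{λ • (-(π b)) : λ > 0}`.  Then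
`sup {t ∈ [0,1] : ∀ w ∈ H, F_b(t, w) ≥ 0} = ‖q̃‖ / ‖q̃ - π b‖`. -/
theorem sup_t_eq_ratio_projected
    {V : Type*} [NormedAddCommGroup V] [InnerProductSpace ℝ V] [FiniteDimensional ℝ V]
    (S : Finset V) (P : Set V) (hP : P = convexHull ℝ (S : Set V))
    (h0 : (0 : V) ∈ interior P)
    (b : V) (hb : b ∈ interior P) (hb0 : b ≠ 0)
    (M : V → ℝ) (hM : ∀ w : V, IsGreatest ((fun x => ⟪x, w⟫) '' P) (M w))
    (q : V) (hq : q ∈ frontier P) (hqray : ∃ μ : ℝ, 0 < μ ∧ q = μ • (-b))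
    (u : V) (hu : u ≠ 0)
    (K : Submodule ℝ V) (hK : K = (Submodule.span ℝ {u})ᗮ)
    (hπb : (K.orthogonalProjectionOnto b : V) ≠ 0)
    (hn : ∃ n : V, n ≠ 0 ∧ ⟪q, n⟫ = M n ∧ ⟪u, n⟫ < 0)
    (qt : K)
    (hqt : qt ∈ frontier ((fun x : V => K.orthogonalProjectionOnto x) '' P))
    (hqtray : ∃ μ : ℝ, 0 < μ ∧ qt = μ • (-(K.orthogonalProjectionOnto b))) :
    sSup {t : ℝ | t ∈ Set.Icc (0 : ℝ) 1 ∧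
        ∀ w : V, 0 ≤ ⟪u, w⟫ → 0 ≤ t * ⟪b, w⟫ + (1 - t) * M w}
      = ‖qt‖ / ‖(qt : V) - (K.orthogonalProjectionOnto b : V)‖ :=
  sup_t_eq_ratio_projected_general S P hP h0 b M hM q hq hqray u K hK hπb hn qt hqt hqtray
end
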